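/- arXiv:2204.06181 — 2 statements merged into one kernel-verified Lean document; each statement's English description precedes it below -/
import Mathlib

section
/- Assume S(A,b) ≠ ∅. Then S(A,b) equals the union over all selections e (with e(i) ∈ J̄_i for each i) of the boxes {x ∈ [0,1]^n : X(e) ≤ x ≤ x̄}. -/
/-!
A point `x ∈ [0,1]ⁿ` solves the system iff no equation is exceeded and every equation is
attained. Since `T_L` is monotone in `x`, "no equation exceeded" is exactly `x ≤ x̄`.
Attaining equation `i` at a column `j` means `b i = 0` or `x j ≥ b i + 1 - a_ij`, so for a
choice `e` of attaining columns it is exactly `X(e) ≤ x`; and because `x ≤ x̄`, the equation is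
then attained at `e i` by `x̄` as well, i.e. `e i ∈ J̄ᵢ`.
-/

/-- The Łukasiewicz t-norm. -/
noncomputable def TL (a x : ℝ) : ℝ := max (a + x - 1) 0

/-- The candidate maximum solution `x̄` (empty min = 1, handled by the `if`). -/
noncomputable def xbar {m n : ℕ} [NeZero m] (A : Fin m → Fin n → ℝ) (b : Fin m → ℝ)
    (j : Fin n) : ℝ :=
  Finset.univ.inf' Finset.univ_nonempty
    (fun i => if b i ≤ A i j then b i + 1 - A i j else 1)

/-- `x` is a feasible solution of the system `A φ x = b`. -/
def Feasible {m n : ℕ} [NeZero m] [NeZero n] (A : Fin m → Fin n → ℝ) (b : Fin m → ℝ)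
    (x : Fin n → ℝ) : Prop :=
  (∀ j, x j ∈ Set.Icc (0:ℝ) 1) ∧
  ∀ i, Finset.univ.sup' Finset.univ_nonempty (fun j => TL (A i j) (x j)) = b i

/-- The candidate minimal point `X(e)` associated to a selection `e`
(empty max = 0, handled by the `if`). -/
noncomputable def Xe {m n : ℕ} [NeZero m] (A : Fin m → Fin n → ℝ) (b : Fin m → ℝ)
    (e : Fin m → Fin n) (j : Fin n) : ℝ :=
  Finset.univ.sup' Finset.univ_nonempty
    (fun i => if e i = j ∧ b i ≠ 0 then b i + 1 - A i j else 0)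

/-- `e` is a valid selection: `e i ∈ J̄ᵢ` for every `i`. -/
def ValidSel {m n : ℕ} [NeZero m] (A : Fin m → Fin n → ℝ) (b : Fin m → ℝ)
    (e : Fin m → Fin n) : Prop :=
  ∀ i, b i ≤ A i (e i) ∧ TL (A i (e i)) (xbar A b (e i)) = b i

open Finset

lemma TL_mono_right (a : ℝ) : Monotone (TL a) :=
  fun _ _ h => max_le_max (by linarith) le_rfl

lemma TL_le_left {a x : ℝ} (ha : 0 ≤ a) (hx : x ≤ 1) : TL a x ≤ a :=
  max_le (by linarith) ha

lemma TL_le_iff {a b x : ℝ} (hb : 0 ≤ b) (hx : x ≤ 1) :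
    TL a x ≤ b ↔ x ≤ if b ≤ a then b + 1 - a else 1 := by
  rw [TL, max_le_iff]
  split_ifs with hba
  · constructor
    · rintro ⟨h, -⟩; linarith
    · intro h; exact ⟨by linarith, hb⟩
  · exact ⟨fun _ => hx, fun _ => ⟨by linarith [not_le.mp hba], hb⟩⟩

lemma le_TL_iff {a b x : ℝ} (hb : 0 ≤ b) : b ≤ TL a x ↔ b = 0 ∨ b + 1 - a ≤ x := by
  rw [TL, le_max_iff, hb.ge_iff_eq', or_comm]
  exact or_congr_right ⟨fun h => by linarith, fun h => by linarith⟩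

section

variable {m n : ℕ} [NeZero m] (A : Fin m → Fin n → ℝ) (b : Fin m → ℝ)

lemma xbar_le_one (j : Fin n) : xbar A b j ≤ 1 := by
  refine (inf'_le _ (mem_univ 0)).trans ?_
  split_ifs <;> linarith

variable {A b}

lemma le_xbar_iff (hb : ∀ i, 0 ≤ b i) {x : ℝ} (hx : x ≤ 1) (j : Fin n) :
    x ≤ xbar A b j ↔ ∀ i, TL (A i j) x ≤ b i := by
  simp only [xbar, le_inf'_iff, mem_univ, true_implies, TL_le_iff (hb _) hx]

lemma Xe_le_iff {e : Fin m → Fin n} {j : Fin n} {y : ℝ} (hy : 0 ≤ y) :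
    Xe A b e j ≤ y ↔ ∀ i, e i = j → b i ≠ 0 → b i + 1 - A i j ≤ y := by
  simp only [Xe, sup'_le_iff, mem_univ, true_implies]
  refine forall_congr' fun i => ?_
  split_ifs with h
  · exact ⟨fun hle _ _ => hle, fun hle => hle h.1 h.2⟩
  · exact ⟨fun _ hei hbi => absurd ⟨hei, hbi⟩ h, fun _ => hy⟩

lemma feasible_iff [NeZero n] (hb : ∀ i, 0 ≤ b i) {x : Fin n → ℝ} :
    Feasible A b x ↔ (∀ j, x j ∈ Set.Icc (0 : ℝ) 1) ∧ (∀ j, x j ≤ xbar A b j) ∧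
      ∀ i, ∃ j, b i ≤ TL (A i j) (x j) := by
  refine and_congr_right fun hx => ?_
  simp only [le_antisymm_iff (b := b _), sup'_le_iff, le_sup'_iff, mem_univ, true_implies,
    true_and, forall_and, le_xbar_iff hb (hx _).2]
  exact and_congr_left' forall_comm

lemma validSel_of_attained (hA : ∀ i j, 0 ≤ A i j) (hb : ∀ i, 0 ≤ b i) {x : Fin n → ℝ}
    (hx : ∀ j, x j ≤ 1) (hle : ∀ j, x j ≤ xbar A b j) {e : Fin m → Fin n}
    (he : ∀ i, b i ≤ TL (A i (e i)) (x (e i))) : ValidSel A b e := fun i =>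
  ⟨(he i).trans (TL_le_left (hA _ _) (hx _)),
    le_antisymm ((le_xbar_iff hb (xbar_le_one A b _) _).1 le_rfl i)
      ((he i).trans (TL_mono_right _ (hle _)))⟩

end

theorem stmt_12_general (m n : ℕ) [NeZero m] [NeZero n] (A : Fin m → Fin n → ℝ) (b : Fin m → ℝ)
    (hA : ∀ i j, A i j ∈ Set.Icc (0:ℝ) 1) (hb : ∀ i, b i ∈ Set.Icc (0:ℝ) 1) :
    {x | Feasible A b x} =
      ⋃ e ∈ {e : Fin m → Fin n | ValidSel A b e},
        {x : Fin n → ℝ | (∀ j, x j ∈ Set.Icc (0:ℝ) 1) ∧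
          ∀ j, Xe A b e j ≤ x j ∧ x j ≤ xbar A b j} := by
  have hb0 : ∀ i, 0 ≤ b i := fun i => (hb i).1
  ext x
  simp only [Set.mem_ofPred_eq, Set.mem_iUnion, exists_prop, feasible_iff hb0, forall_and]
  constructor
  · rintro ⟨hx, hle, hatt⟩
    choose e he using hatt
    refine ⟨e, validSel_of_attained (fun i j => (hA i j).1) hb0 (fun j => (hx j).2) hle he,
      hx, fun j => (Xe_le_iff (hx j).1).2 fun i hei hbi => ?_, hle⟩
    subst hei
    exact ((le_TL_iff (hb0 i)).1 (he i)).resolve_left hbi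
  · rintro ⟨e, -, hx, hXe, hle⟩
    refine ⟨hx, hle, fun i => ⟨e i, (le_TL_iff (hb0 i)).2 ?_⟩⟩
    exact (em (b i = 0)).imp_right fun hbi => (Xe_le_iff (hx _).1).1 (hXe (e i)) i rfl hbi

theorem stmt_12 (m n : ℕ) [NeZero m] [NeZero n] (A : Fin m → Fin n → ℝ) (b : Fin m → ℝ)
    (hA : ∀ i j, A i j ∈ Set.Icc (0:ℝ) 1) (hb : ∀ i, b i ∈ Set.Icc (0:ℝ) 1)
    (hS : ∃ x, Feasible A b x) :
    {x | Feasible A b x} =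
      ⋃ e ∈ {e : Fin m → Fin n | ValidSel A b e},
        {x : Fin n → ℝ | (∀ j, x j ∈ Set.Icc (0:ℝ) 1) ∧
          ∀ j, Xe A b e j ≤ x j ∧ x j ≤ xbar A b j} :=
  stmt_12_general m n A b hA hb
end

section
/- If a selection e satisfies e(i) ∈ J_i := {j : a_{ij} ≥ b_i} for all i but e(i₀) ∉ J̄_{i₀} for some i₀, then X(e) is infeasible: X(e) ∉ S(A,b). -/
/-!
Every feasible `x` lies below `x̄`, because row `i` forces `a_{ij} + x_j - 1 ≤ b_i`.
With `j = e(i₀)`, the point `X(e)` has `X(e)_j ≥ b_{i₀} + 1 - a_{i₀j} ≥ x̄_j`, and the second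
inequality is strict exactly when `T_L(a_{i₀j}, x̄_j) ≠ b_{i₀}` (feasibility already forces
`b ≥ 0`, as `T_L ≥ 0`); so `X(e) ≰ x̄`.
-/

lemma TL_nonneg (a x : ℝ) : 0 ≤ TL a x := le_max_right _ _

lemma TL_add_one_sub_self {a b : ℝ} (hb : 0 ≤ b) : TL a (b + 1 - a) = b := by
  simp only [TL, show a + (b + 1 - a) - 1 = b by ring, max_eq_left hb]

section

variable {m n : ℕ} [NeZero m] (A : Fin m → Fin n → ℝ) (b : Fin m → ℝ)

lemma xbar_le {i : Fin m} {j : Fin n} (h : b i ≤ A i j) : xbar A b j ≤ b i + 1 - A i j :=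
  (Finset.inf'_le _ (Finset.mem_univ i)).trans_eq (if_pos h)

lemma le_Xe (e : Fin m → Fin n) {i : Fin m} (hi : b i ≠ 0) :
    b i + 1 - A i (e i) ≤ Xe A b e (e i) :=
  (if_pos ⟨rfl, hi⟩).symm.trans_le <| Finset.le_sup'
    (fun k => if e k = e i ∧ b k ≠ 0 then b k + 1 - A k (e i) else 0) (Finset.mem_univ i)

variable [NeZero n] {A b} {x : Fin n → ℝ}

lemma Feasible.TL_le (hx : Feasible A b x) (i : Fin m) (j : Fin n) : TL (A i j) (x j) ≤ b i :=
  (hx.2 i).symm ▸ Finset.le_sup' (fun j => TL (A i j) (x j)) (Finset.mem_univ j)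

lemma Feasible.rhs_nonneg (hx : Feasible A b x) (i : Fin m) : 0 ≤ b i :=
  (TL_nonneg _ _).trans (hx.TL_le i 0)

lemma Feasible.le_xbar (hx : Feasible A b x) (j : Fin n) : x j ≤ xbar A b j := by
  refine Finset.le_inf' _ _ fun i _ => ?_
  split_ifs
  · linarith [(le_max_left (A i j + x j - 1) 0).trans (hx.TL_le i j)]
  · exact (hx.1 j).2

end

theorem stmt_17_general (m n : ℕ) [NeZero m] [NeZero n] (A : Fin m → Fin n → ℝ) (b : Fin m → ℝ)
    (e : Fin m → Fin n) (he : ∀ i, b i ≤ A i (e i))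
    (i₀ : Fin m) (hi₀ : TL (A i₀ (e i₀)) (xbar A b (e i₀)) ≠ b i₀) (hb₀ : b i₀ ≠ 0) :
    ¬ Feasible A b (Xe A b e) := by
  intro hfeas
  have hxbar_lt : xbar A b (e i₀) < b i₀ + 1 - A i₀ (e i₀) := by
    refine (xbar_le A b (he i₀)).lt_of_ne fun h => hi₀ ?_
    rw [h, TL_add_one_sub_self (hfeas.rhs_nonneg i₀)]
  linarith [le_Xe A b e hb₀, hfeas.le_xbar (e i₀)]

theorem stmt_17 (m n : ℕ) [NeZero m] [NeZero n] (A : Fin m → Fin n → ℝ) (b : Fin m → ℝ)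
    (hA : ∀ i j, A i j ∈ Set.Icc (0:ℝ) 1) (hb : ∀ i, b i ∈ Set.Icc (0:ℝ) 1)
    (e : Fin m → Fin n) (he : ∀ i, b i ≤ A i (e i))
    (i₀ : Fin m) (hi₀ : TL (A i₀ (e i₀)) (xbar A b (e i₀)) ≠ b i₀) (hb₀ : b i₀ ≠ 0) :
    ¬ Feasible A b (Xe A b e) :=
  stmt_17_general m n A b e he i₀ hi₀ hb₀
end
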